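/- Let ε be a real-valued random variable with cumulative distribution function F(s) = P(ε ≤ s). Suppose P(ε = 0) = 0 and F(0) = α for some α ∈ (0,1). Then for every t ∈ ℝ, E[τ_α(ε − t) − τ_α(ε)] = ∫₀^t (F(s) − α) ds (with the convention ∫₀^t = −∫_t^0 for t < 0); in particular, the expectation is well defined since |τ_α(ε − t) − τ_α(ε)| ≤ |t| almost surely. -/

import Mathlib

/-!
Knight's identity `τ_α(u - t) - τ_α(u) = ∫₀^t (1{u < s} - α) ds` holds for every real `u`; it
bounds the loss difference by `|t|` and, after taking expectations and swapping the integrals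
(Fubini), turns the left side into `∫₀^t (P(ε < s) - α) ds`. Finally `P(ε < s) = F(s)` for
all but the countably many atoms `s` of the law of `ε`, which are Lebesgue-null.
-/

open MeasureTheory Set

/-- The check function `τ_α(u) = u (α − 1{u < 0})`. -/
noncomputable def checkFn (α u : ℝ) : ℝ := u * (α - if u < 0 then 1 else 0)

lemma checkFn_eq (α u : ℝ) : checkFn α u = α * u + max (-u) 0 := by
  rcases lt_or_ge u 0 with hu | hu
  · simp [checkFn, hu, max_eq_left (neg_nonneg.2 hu.le)]; ring
  · simp [checkFn, not_lt.2 hu, hu]; ring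

lemma continuous_checkFn (α : ℝ) : Continuous (checkFn α) := by
  simp_rw [funext (checkFn_eq α)]
  fun_prop

lemma intervalIntegral_indicator_Ioi_self (u b : ℝ) :
    ∫ s in u..b, (Ioi u).indicator 1 s = max (b - u) 0 := by
  rcases le_total u b with h | h
  · rw [intervalIntegral.integral_of_le h, setIntegral_congr_fun (f := (Ioi u).indicator 1)
      (g := 1) measurableSet_Ioc fun s hs => indicator_of_mem hs.1 _]
    simp [h]
  · rw [intervalIntegral.integral_of_ge h, setIntegral_congr_fun (f := (Ioi u).indicator 1)
      (g := fun _ => 0) measurableSet_Ioc fun s hs => indicator_of_notMem (not_lt.2 hs.2) _]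
    simp [h]

lemma intervalIntegrable_indicator_Ioi (u a b : ℝ) :
    IntervalIntegrable ((Ioi u).indicator (1 : ℝ → ℝ)) volume a b :=
  ⟨(integrableOn_const measure_Ioc_lt_top.ne).indicator measurableSet_Ioi,
    (integrableOn_const measure_Ioc_lt_top.ne).indicator measurableSet_Ioi⟩

lemma intervalIntegral_indicator_Ioi (u a b : ℝ) :
    ∫ s in a..b, (Ioi u).indicator 1 s = max (b - u) 0 - max (a - u) 0 := by
  rw [← intervalIntegral.integral_interval_sub_left (intervalIntegrable_indicator_Ioi u u b)
    (intervalIntegrable_indicator_Ioi u u a), intervalIntegral_indicator_Ioi_self,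
    intervalIntegral_indicator_Ioi_self]

lemma checkFn_sub_checkFn_eq_integral (α t u : ℝ) :
    checkFn α (u - t) - checkFn α u = ∫ s in (0 : ℝ)..t, ((Ioi u).indicator 1 s - α) := by
  rw [intervalIntegral.integral_sub (intervalIntegrable_indicator_Ioi u 0 t)
      intervalIntegrable_const, intervalIntegral_indicator_Ioi, intervalIntegral.integral_const,
    checkFn_eq, checkFn_eq, neg_sub]
  simp only [zero_sub, sub_zero, smul_eq_mul]
  ring

lemma abs_checkFn_sub_checkFn_le {α : ℝ} (hα : α ∈ Icc (0 : ℝ) 1) (t u : ℝ) :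
    |checkFn α (u - t) - checkFn α u| ≤ |t| := by
  have hbound : ∀ s, ‖(Ioi u).indicator 1 s - α‖ ≤ 1 := fun s => by
    by_cases hs : s ∈ Ioi u <;> simp [hs, abs_le] <;> constructor <;> linarith [hα.1, hα.2]
  simpa [checkFn_sub_checkFn_eq_integral] using
    intervalIntegral.norm_integral_le_of_norm_le_const (a := 0) (b := t) fun s _ => hbound s

lemma ae_measure_le_eq_measure_lt {Ω : Type*} [MeasurableSpace Ω] (P : Measure Ω) (X : Ω → ℝ) :
    (fun s => P {ω | X ω ≤ s}) =ᵐ[volume] fun s => P {ω | X ω < s} :=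
  -- Read in `ℝᵒᵈ`, the jumps of `t ↦ μ {t ≤ g}` are the jumps of the cdf of `X`.
  Set.Countable.measure_zero (α := ℝ)
    (countable_meas_le_ne_meas_lt (R := ℝᵒᵈ) P fun ω => OrderDual.toDual (X ω)) volume

lemma indicator_Ioi_one_eq_indicator_setOf_lt {Ω : Type*} (X : Ω → ℝ) (ω : Ω) (s : ℝ) :
    (Ioi (X ω)).indicator (1 : ℝ → ℝ) s = {ω' | X ω' < s}.indicator 1 ω := by
  by_cases h : X ω < s <;> simp [h]

lemma integral_intervalIntegral_indicator_Ioi_sub {Ω : Type*} [MeasurableSpace Ω]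
    (P : Measure Ω) [IsProbabilityMeasure P] {X : Ω → ℝ} (hX : Measurable X) (c a b : ℝ) :
    ∫ ω, (∫ s in a..b, ((Ioi (X ω)).indicator 1 s - c)) ∂P
      = ∫ s in a..b, (P.real {ω | X ω < s} - c) := by
  simp_rw [indicator_Ioi_one_eq_indicator_setOf_lt X]
  rw [← intervalIntegral_integral_swap]
  · refine intervalIntegral.integral_congr fun s _ => ?_
    have hs : MeasurableSet {ω | X ω < s} := measurableSet_lt hX measurable_const
    rw [integral_sub ((integrable_const (1 : ℝ)).indicator hs (f := 1)) (integrable_const c),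
      integral_indicator_one hs, integral_const, probReal_univ, one_smul]
  · have : IsFiniteMeasure (volume.restrict (uIoc a b)) := Real.isFiniteMeasure_restrict_Ioc _ _
    have hS : MeasurableSet {p : ℝ × Ω | X p.2 < p.1} :=
      measurableSet_lt (hX.comp measurable_snd) measurable_fst
    exact ((integrable_const (1 : ℝ)).indicator hS).sub (integrable_const c)

theorem expected_check_loss_integral_general
    {Ω : Type*} [MeasurableSpace Ω] (P : Measure Ω) [IsProbabilityMeasure P]
    (ε : Ω → ℝ) (hε : Measurable ε)
    (F : ℝ → ℝ) (hF : ∀ s, F s = (P {ω | ε ω ≤ s}).toReal)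
    (α : ℝ) (hα : α ∈ Set.Ioo (0 : ℝ) 1) (t : ℝ) :
    (∀ᵐ ω ∂P, |checkFn α (ε ω - t) - checkFn α (ε ω)| ≤ |t|) ∧
    Integrable (fun ω => checkFn α (ε ω - t) - checkFn α (ε ω)) P ∧
    ∫ ω, (checkFn α (ε ω - t) - checkFn α (ε ω)) ∂P = ∫ s in (0 : ℝ)..t, (F s - α) := by
  have hbound : ∀ ω, |checkFn α (ε ω - t) - checkFn α (ε ω)| ≤ |t| := fun ω =>
    abs_checkFn_sub_checkFn_le (Ioo_subset_Icc_self hα) t (ε ω)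
  have hmeas : Measurable fun ω => checkFn α (ε ω - t) - checkFn α (ε ω) :=
    ((continuous_checkFn α).measurable.comp (hε.sub_const t)).sub
      ((continuous_checkFn α).measurable.comp hε)
  refine ⟨ae_of_all _ hbound, .of_bound hmeas.aestronglyMeasurable |t| (ae_of_all _ hbound), ?_⟩
  calc ∫ ω, (checkFn α (ε ω - t) - checkFn α (ε ω)) ∂P
      = ∫ ω, (∫ s in (0 : ℝ)..t, ((Ioi (ε ω)).indicator 1 s - α)) ∂P :=
        integral_congr_ae (ae_of_all _ fun ω => checkFn_sub_checkFn_eq_integral α t (ε ω))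
    _ = ∫ s in (0 : ℝ)..t, (P.real {ω | ε ω < s} - α) :=
        integral_intervalIntegral_indicator_Ioi_sub P hε α 0 t
    _ = ∫ s in (0 : ℝ)..t, (F s - α) := by
        refine intervalIntegral.integral_congr_ae ?_
        filter_upwards [ae_measure_le_eq_measure_lt P ε] with s hs _
        rw [hF, measureReal_def, hs]

/-- Let `ε` be a real random variable with cdf `F(s) = P(ε ≤ s)`, with `P(ε = 0) = 0` and
`F(0) = α` for some `α ∈ (0,1)`. Then for every `t`, the difference of check losses is a.s.
bounded by `|t|` (hence integrable), and
`E[τ_α(ε − t) − τ_α(ε)] = ∫₀^t (F(s) − α) ds`. -/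
theorem expected_check_loss_integral
    {Ω : Type*} [MeasurableSpace Ω] (P : Measure Ω) [IsProbabilityMeasure P]
    (ε : Ω → ℝ) (hε : Measurable ε)
    (F : ℝ → ℝ) (hF : ∀ s, F s = (P {ω | ε ω ≤ s}).toReal)
    (hzero : P {ω | ε ω = 0} = 0)
    (α : ℝ) (hα : α ∈ Set.Ioo (0 : ℝ) 1) (hF0 : F 0 = α) (t : ℝ) :
    (∀ᵐ ω ∂P, |checkFn α (ε ω - t) - checkFn α (ε ω)| ≤ |t|) ∧
    Integrable (fun ω => checkFn α (ε ω - t) - checkFn α (ε ω)) P ∧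
    ∫ ω, (checkFn α (ε ω - t) - checkFn α (ε ω)) ∂P = ∫ s in (0 : ℝ)..t, (F s - α) :=
  expected_check_loss_integral_general P ε hε F hF α hα t
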